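/- arXiv:2011.11580 — 2 statements merged into one kernel-verified Lean document; each statement's English description precedes it below -/
import Mathlib

section
/- Let n ≥ 1 and d = 2ⁿ. Let 𝒰 be a unitary ensemble on ℂ^d and ℰ : M_d → M_d a quantum channel such that the shadow channel M_{𝒰,ℰ} is invertible as a linear map. Let O be a Hermitian matrix and ρ a density matrix on ℂ^d. Then the variance of the single-sample estimator satisfies E_{U∼𝒰} Σ_{b=1}^d ⟨b|ℰ(U ρ U†)|b⟩ · ( tr(O · M⁻¹_{𝒰,ℰ}(U†|b⟩⟨b|U)) − tr(O ρ) )² ≤ ‖O − (tr(O)/d)·I‖²_{shadow,𝒰,ℰ}. -/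
/-!
Let `O₀` be the traceless part of `O`, `p_{k,b} = ⟨b|ℰ(U_k ρ U_k†)|b⟩` and
`x_{k,b} = tr(O₀ M⁻¹(U_k†|b⟩⟨b|U_k))`. The shadow channel preserves traces, hence so does `M⁻¹`,
and the estimator minus `tr(O ρ)` equals `x_{k,b} - tr(O₀ ρ)`. Through the adjoint, `x_{k,b}` is
linear in `U_k†|b⟩⟨b|U_k`, so its `p`-average is `tr(O₀ M⁻¹(M(ρ))) = tr(O₀ ρ)`, a real number;
the variance is then at most the second moment. Finally `x_{k,b}` is the complex conjugate of
`⟨b|U_k M^{-1,†}(O₀) U_k†|b⟩`, and as the weights `p` are real the two second moments have the same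
real part, which is the value at `σ = ρ` of the supremum defining the shadow seminorm.
-/

open scoped ComplexOrder Kronecker
open Matrix MeasureTheory

noncomputable section

namespace NoisyShadows

/-- The shadow channel `M_{𝒰,ℰ}` of the unitary ensemble `U` (a nonempty finite family,
averaged uniformly) and the map `E`:
`M(A) = E_{U∼𝒰} Σ_b ⟨b|E(U A U†)|b⟩ · U†|b⟩⟨b|U`. -/
def shadowChannel {κ ι : Type*} [Fintype κ] [Fintype ι] [DecidableEq ι]
    (U : κ → Matrix ι ι ℂ) (E : Matrix ι ι ℂ → Matrix ι ι ℂ)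
    (A : Matrix ι ι ℂ) : Matrix ι ι ℂ :=
  (Fintype.card κ : ℂ)⁻¹ • ∑ k : κ, ∑ b : ι,
    (E (U k * A * (U k)ᴴ)) b b • ((U k)ᴴ * Matrix.single b b 1 * U k)

/-- A positive map sends positive semidefinite matrices to positive semidefinite matrices. -/
def IsPositiveMap {ι : Type*} [Fintype ι] (Φ : Matrix ι ι ℂ → Matrix ι ι ℂ) : Prop :=
  ∀ A : Matrix ι ι ℂ, A.PosSemidef → (Φ A).PosSemidef

/-- The blockwise map `id_{M_k} ⊗ Φ`. -/
def tensorIdMap (k : ℕ) {ι : Type*} (Φ : Matrix ι ι ℂ → Matrix ι ι ℂ) :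
    Matrix (Fin k × ι) (Fin k × ι) ℂ → Matrix (Fin k × ι) (Fin k × ι) ℂ :=
  fun M => Matrix.of fun p q => Φ (Matrix.of fun a b => M (p.1, a) (q.1, b)) p.2 q.2

/-- Complete positivity. -/
def IsCompletelyPositive {ι : Type*} [Fintype ι] (Φ : Matrix ι ι ℂ → Matrix ι ι ℂ) : Prop :=
  ∀ k : ℕ, 1 ≤ k → IsPositiveMap (tensorIdMap k Φ)

/-- Trace preservation. -/
def IsTracePreserving {ι : Type*} [Fintype ι] (Φ : Matrix ι ι ℂ → Matrix ι ι ℂ) : Prop :=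
  ∀ A : Matrix ι ι ℂ, (Φ A).trace = A.trace

/-- A quantum channel is a completely positive trace-preserving linear map. -/
def IsQuantumChannel {ι : Type*} [Fintype ι] (Φ : Matrix ι ι ℂ → Matrix ι ι ℂ) : Prop :=
  IsCompletelyPositive Φ ∧ IsTracePreserving Φ

/-- A density matrix: positive semidefinite with trace one. -/
def IsDensityMatrix {ι : Type*} [Fintype ι] (σ : Matrix ι ι ℂ) : Prop :=
  σ.PosSemidef ∧ σ.trace = 1

/-- All members of the family are unitary matrices. -/
def IsUnitaryEnsemble {κ ι : Type*} [Fintype ι] [DecidableEq ι]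
    (U : κ → Matrix ι ι ℂ) : Prop :=
  ∀ k, U k ∈ Matrix.unitaryGroup ι ℂ

/-- `Ψ` is the adjoint of `Φ` with respect to the Hilbert–Schmidt inner product
`⟨A,B⟩ = tr(A† B)`. -/
def IsHSAdjoint {ι : Type*} [Fintype ι] (Φ Ψ : Matrix ι ι ℂ → Matrix ι ι ℂ) : Prop :=
  ∀ A B : Matrix ι ι ℂ, (Aᴴ * Φ B).trace = ((Ψ A)ᴴ * B).trace

/-- Square of the shadow seminorm `‖O‖²_{shadow,𝒰,ℰ}`, expressed with a given adjoint
`MinvAdj` of the inverse shadow channel: the supremum over density matrices `σ` of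
`E_{U∼𝒰} Σ_b ⟨b|E(UσU†)|b⟩ ⟨b|U M^{-1,†}(O) U†|b⟩²`. -/
def shadowNormSq {κ ι : Type*} [Fintype κ] [Fintype ι] [DecidableEq ι]
    (U : κ → Matrix ι ι ℂ) (E MinvAdj : Matrix ι ι ℂ → Matrix ι ι ℂ)
    (O : Matrix ι ι ℂ) : ℝ :=
  sSup {x : ℝ | ∃ σ : Matrix ι ι ℂ, IsDensityMatrix σ ∧
    x = ((Fintype.card κ : ℂ)⁻¹ * ∑ k : κ, ∑ b : ι,
      (E (U k * σ * (U k)ᴴ)) b b * ((U k * MinvAdj O * (U k)ᴴ) b b) ^ 2).re}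

/-- The shadow seminorm `‖O‖_{shadow,𝒰,ℰ}`. -/
def shadowNorm {κ ι : Type*} [Fintype κ] [Fintype ι] [DecidableEq ι]
    (U : κ → Matrix ι ι ℂ) (E MinvAdj : Matrix ι ι ℂ → Matrix ι ι ℂ)
    (O : Matrix ι ι ℂ) : ℝ :=
  Real.sqrt (shadowNormSq U E MinvAdj O)

/-- `Tr(ℰ∘diag) = Σ_b ⟨b|ℰ(|b⟩⟨b|)|b⟩`. -/
def diagTrace {ι : Type*} [Fintype ι] [DecidableEq ι]
    (E : Matrix ι ι ℂ → Matrix ι ι ℂ) : ℂ :=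
  ∑ b : ι, (E (Matrix.single b b 1)) b b

/-- The depolarizing map `D_{d,f}(A) = f·A + (1−f)·tr(A)·I/d` (where `d` is the size of the
index type). -/
def depol (ι : Type*) [Fintype ι] [DecidableEq ι] (f : ℂ)
    (A : Matrix ι ι ℂ) : Matrix ι ι ℂ :=
  f • A + ((1 - f) * (A.trace / (Fintype.card ι : ℂ))) • (1 : Matrix ι ι ℂ)

/-- `t`-fold Kronecker power of a matrix. -/
def kpow {ι : Type*} (t : ℕ) (U : Matrix ι ι ℂ) :
    Matrix (Fin t → ι) (Fin t → ι) ℂ :=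
  Matrix.of fun x y => ∏ j, U (x j) (y j)

instance {ι : Type*} [Fintype ι] [DecidableEq ι] :
    MeasurableSpace (Matrix.unitaryGroup ι ℂ) := borel _

/-- `𝒰` is a unitary `t`-design: the `t`-fold ensemble twirl coincides with the `t`-fold twirl
over the Haar probability measure on the unitary group. -/
def IsUnitaryDesign {κ ι : Type*} [Fintype κ] [Fintype ι] [DecidableEq ι]
    (U : κ → Matrix ι ι ℂ) (t : ℕ) : Prop :=
  ∃ μ : Measure (Matrix.unitaryGroup ι ℂ), μ.IsHaarMeasure ∧ IsProbabilityMeasure μ ∧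
    ∀ A : Matrix (Fin t → ι) (Fin t → ι) ℂ, ∀ x y : Fin t → ι,
      (Fintype.card κ : ℂ)⁻¹ * ∑ k : κ, (kpow t (U k) * A * (kpow t (U k))ᴴ) x y
        = ∫ V : Matrix.unitaryGroup ι ℂ,
            (kpow t (V : Matrix ι ι ℂ) * A * (kpow t (V : Matrix ι ι ℂ))ᴴ) x y ∂μ

/-- Kronecker product of an `n`-indexed family of `2×2` matrices. -/
def kprod {n : ℕ} (A : Fin n → Matrix (Fin 2) (Fin 2) ℂ) :
    Matrix (Fin n → Fin 2) (Fin n → Fin 2) ℂ :=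
  Matrix.of fun x y => ∏ i, A i (x i) (y i)

/-- Spectral (operator) norm of a matrix. -/
def spNorm {ι : Type*} [Fintype ι] [DecidableEq ι] (A : Matrix ι ι ℂ) : ℝ :=
  ‖Matrix.toEuclideanCLM (𝕜 := ℂ) A‖

theorem IsCompletelyPositive.isPositiveMap {ι : Type*} [Fintype ι]
    {Φ : Matrix ι ι ℂ → Matrix ι ι ℂ} (h : IsCompletelyPositive Φ) : IsPositiveMap Φ := by
  intro A hA
  have hΦA : Φ A = (tensorIdMap 1 Φ (A.submatrix Prod.snd Prod.snd)).submatrix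
      (fun i => ((0 : Fin 1), i)) (fun i => ((0 : Fin 1), i)) := rfl
  rw [hΦA]
  exact (h 1 le_rfl _ (hA.submatrix _)).submatrix _

theorem re_mul_sum_sum_mul_sub_sq_le {κ ι : Type*} [Fintype κ] [Fintype ι] (c m : ℂ)
    (w x : κ → ι → ℂ) (hw : c * ∑ k, ∑ b, w k b = 1) (hmean : c * ∑ k, ∑ b, w k b * x k b = m)
    (hm : m.im = 0) :
    (c * ∑ k, ∑ b, w k b * (x k b - m) ^ 2).re ≤ (c * ∑ k, ∑ b, w k b * x k b ^ 2).re := by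
  have hexpand :
      c * ∑ k, ∑ b, w k b * (x k b - m) ^ 2 = c * ∑ k, ∑ b, w k b * x k b ^ 2 - m ^ 2 := by
    have h : ∀ k b, w k b * (x k b - m) ^ 2
        = w k b * x k b ^ 2 - 2 * m * (w k b * x k b) + m ^ 2 * w k b := fun _ _ => by ring
    simp only [h, Finset.sum_add_distrib, Finset.sum_sub_distrib, ← Finset.mul_sum]
    linear_combination (-2 * m) * hmean + m ^ 2 * hw
  have hm2 : (m ^ 2).re = m.re ^ 2 := by simp [sq, hm]
  rw [hexpand, Complex.sub_re, hm2]
  linarith [sq_nonneg m.re]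

theorem re_mul_sum_sum_mul_star_sq {κ ι : Type*} [Fintype κ] [Fintype ι] {c : ℂ} (hc : c.im = 0)
    {p : κ → ι → ℂ} (hp : ∀ k b, (p k b).im = 0) (x : κ → ι → ℂ) :
    (c * ∑ k, ∑ b, p k b * star (x k b) ^ 2).re = (c * ∑ k, ∑ b, p k b * x k b ^ 2).re := by
  rw [← Complex.conj_re (c * _)]
  simp only [map_mul, map_sum, map_pow, Complex.conj_eq_iff_im.2 hc,
    Complex.conj_eq_iff_im.2 (hp _ _), Complex.star_def, Complex.conj_conj]

section

variable {ι κ : Type*} [Fintype ι] [Fintype κ]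

theorem IsDensityMatrix.map {σ : Matrix ι ι ℂ} {Φ : Matrix ι ι ℂ → Matrix ι ι ℂ}
    (hσ : IsDensityMatrix σ) (hΦ : IsPositiveMap Φ) (hTP : IsTracePreserving Φ) :
    IsDensityMatrix (Φ σ) :=
  ⟨hΦ σ hσ.1, (hTP σ).trans hσ.2⟩

theorem IsDensityMatrix.im_diag {σ : Matrix ι ι ℂ} (hσ : IsDensityMatrix σ) (b : ι) :
    (σ b b).im = 0 :=
  (Complex.nonneg_iff.1 hσ.1.diag_nonneg).2.symm

theorem IsDensityMatrix.norm_diag_le_one {σ : Matrix ι ι ℂ} (hσ : IsDensityMatrix σ) (b : ι) :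
    ‖σ b b‖ ≤ 1 := by
  have hle : σ b b ≤ σ.trace :=
    Finset.single_le_sum (f := fun i => σ i i) (fun i _ => hσ.1.diag_nonneg) (Finset.mem_univ b)
  rw [hσ.2] at hle
  rw [← Complex.re_eq_norm.2 hσ.1.diag_nonneg]
  exact (Complex.le_def.1 hle).1

theorem inv_card_mul_sum_sum_diag_eq_one {τ : κ → Matrix ι ι ℂ} [Nonempty κ]
    (hτ : ∀ k, IsDensityMatrix (τ k)) : (Fintype.card κ : ℂ)⁻¹ * ∑ k, ∑ b, τ k b b = 1 := by
  simp only [show ∀ k, ∑ b, τ k b b = 1 from fun k => (hτ k).2, Finset.sum_const,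
    Finset.card_univ, nsmul_one]
  exact inv_mul_cancel₀ (Nat.cast_ne_zero.2 Fintype.card_ne_zero)

theorem _root_.Matrix.IsHermitian.im_trace_mul {A B : Matrix ι ι ℂ} (hA : A.IsHermitian)
    (hB : B.IsHermitian) :
    (A * B).trace.im = 0 := by
  rw [← Complex.conj_eq_iff_im, ← Complex.star_def, ← trace_conjTranspose, conjTranspose_mul,
    hA.eq, hB.eq, trace_mul_comm]

variable [DecidableEq ι]

theorem trace_sub_smul_one_mul_sub_trace (A : Matrix ι ι ℂ) (s : ℂ) {X Y : Matrix ι ι ℂ}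
    (h : X.trace = Y.trace) :
    ((A - s • 1) * X).trace - ((A - s • 1) * Y).trace = (A * X).trace - (A * Y).trace := by
  simp only [sub_mul, smul_mul, one_mul, trace_sub, trace_smul, h]
  ring

theorem trace_unitary_conj (A : Matrix ι ι ℂ) {V : Matrix ι ι ℂ} (hV : V ∈ unitaryGroup ι ℂ) :
    (V * A * Vᴴ).trace = A.trace := by
  rw [trace_mul_cycle, ← star_eq_conjTranspose, mem_unitaryGroup_iff'.1 hV, one_mul]

theorem IsDensityMatrix.unitary_conj {σ V : Matrix ι ι ℂ} (hσ : IsDensityMatrix σ)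
    (hV : V ∈ unitaryGroup ι ℂ) : IsDensityMatrix (V * σ * Vᴴ) :=
  ⟨hσ.1.mul_mul_conjTranspose_same V, (trace_unitary_conj σ hV).trans hσ.2⟩

theorem trace_conjTranspose_mul_single_mul {V : Matrix ι ι ℂ} (hV : V ∈ unitaryGroup ι ℂ)
    (b : ι) : (Vᴴ * single b b 1 * V).trace = 1 := by
  rw [trace_mul_cycle, ← star_eq_conjTranspose, mem_unitaryGroup_iff.1 hV, one_mul,
    trace_single_eq_same]

theorem trace_shadowChannel [Nonempty κ] {U : κ → Matrix ι ι ℂ} (hU : IsUnitaryEnsemble U)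
    {E : Matrix ι ι ℂ → Matrix ι ι ℂ} (hTP : IsTracePreserving E) (A : Matrix ι ι ℂ) :
    (shadowChannel U E A).trace = A.trace := by
  have hk : ∀ k, ∑ b, E (U k * A * (U k)ᴴ) b b = A.trace := fun k =>
    (hTP _).trans (trace_unitary_conj A (hU k))
  simp only [shadowChannel, trace_smul, trace_sum, smul_eq_mul,
    trace_conjTranspose_mul_single_mul (hU _), mul_one, hk, Finset.sum_const, Finset.card_univ,
    nsmul_eq_mul, ← mul_assoc]
  rw [inv_mul_cancel₀ (Nat.cast_ne_zero.2 Fintype.card_ne_zero), one_mul]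

theorem IsHSAdjoint.trace_mul_apply_conj_single {Φ Ψ : Matrix ι ι ℂ → Matrix ι ι ℂ}
    (h : IsHSAdjoint Φ Ψ) (A V : Matrix ι ι ℂ) (b : ι) :
    (Aᴴ * Φ (Vᴴ * single b b 1 * V)).trace = star ((V * Ψ A * Vᴴ) b b) := by
  rw [h, ← conjTranspose_apply, trace_mul_comm, Matrix.mul_assoc, Matrix.mul_assoc,
    trace_mul_comm, Matrix.mul_assoc, trace_single_mul, one_smul, conjTranspose_mul,
    conjTranspose_mul, conjTranspose_conjTranspose, Matrix.mul_assoc]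

theorem IsHSAdjoint.inv_card_mul_sum_sum_mul_trace {Φ Ψ : Matrix ι ι ℂ → Matrix ι ι ℂ}
    (h : IsHSAdjoint Φ Ψ) {U : κ → Matrix ι ι ℂ} {E : Matrix ι ι ℂ → Matrix ι ι ℂ}
    (hΦ : Function.LeftInverse Φ (shadowChannel U E)) (A ρ : Matrix ι ι ℂ) :
    (Fintype.card κ : ℂ)⁻¹ * ∑ k, ∑ b,
        E (U k * ρ * (U k)ᴴ) b b * (Aᴴ * Φ ((U k)ᴴ * single b b 1 * U k)).trace
      = (Aᴴ * ρ).trace :=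
  calc _ = ((Ψ A)ᴴ * shadowChannel U E ρ).trace := by
        simp only [h A, shadowChannel, Matrix.mul_smul, trace_smul, Matrix.mul_sum, trace_sum,
          smul_eq_mul]
    _ = (Aᴴ * Φ (shadowChannel U E ρ)).trace := (h _ _).symm
    _ = (Aᴴ * ρ).trace := by rw [hΦ ρ]

theorem re_le_shadowNormSq {U : κ → Matrix ι ι ℂ} (hU : IsUnitaryEnsemble U)
    {E : Matrix ι ι ℂ → Matrix ι ι ℂ} (hpos : IsPositiveMap E) (hTP : IsTracePreserving E)
    (MinvAdj : Matrix ι ι ℂ → Matrix ι ι ℂ) (O : Matrix ι ι ℂ) {σ : Matrix ι ι ℂ}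
    (hσ : IsDensityMatrix σ) :
    ((Fintype.card κ : ℂ)⁻¹ * ∑ k, ∑ b,
        E (U k * σ * (U k)ᴴ) b b * ((U k * MinvAdj O * (U k)ᴴ) b b) ^ 2).re
      ≤ shadowNormSq U E MinvAdj O := by
  refine le_csSup ⟨(Fintype.card κ : ℝ)⁻¹ * ∑ k, ∑ b, ‖(U k * MinvAdj O * (U k)ᴴ) b b‖ ^ 2, ?_⟩
    ⟨σ, hσ, rfl⟩
  rintro _ ⟨τ, hτ, rfl⟩
  rw [show (Fintype.card κ : ℂ)⁻¹ = ((Fintype.card κ : ℝ)⁻¹ : ℝ) by push_cast; rfl,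
    Complex.re_ofReal_mul]
  simp only [Complex.re_sum]
  gcongr with k _ b _
  calc _ ≤ ‖E (U k * τ * (U k)ᴴ) b b * ((U k * MinvAdj O * (U k)ᴴ) b b) ^ 2‖ :=
        Complex.re_le_norm _
    _ = ‖E (U k * τ * (U k)ᴴ) b b‖ * ‖(U k * MinvAdj O * (U k)ᴴ) b b‖ ^ 2 := by
        rw [norm_mul, norm_pow]
    _ ≤ _ := mul_le_of_le_one_left (by positivity)
        (((hτ.unitary_conj (hU k)).map hpos hTP).norm_diag_le_one b)

end

theorem stmt_1_general {n : ℕ} {κ : Type*} [Fintype κ] [Nonempty κ]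
    (U : κ → Matrix (Fin (2 ^ n)) (Fin (2 ^ n)) ℂ) (hU : IsUnitaryEnsemble U)
    (E : Matrix (Fin (2 ^ n)) (Fin (2 ^ n)) ℂ →ₗ[ℂ] Matrix (Fin (2 ^ n)) (Fin (2 ^ n)) ℂ)
    (hE : IsQuantumChannel (⇑E))
    (Minv MinvAdj : Matrix (Fin (2 ^ n)) (Fin (2 ^ n)) ℂ → Matrix (Fin (2 ^ n)) (Fin (2 ^ n)) ℂ)
    (hMinvL : Function.LeftInverse Minv (shadowChannel U (⇑E)))
    (hMinvR : Function.RightInverse Minv (shadowChannel U (⇑E)))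
    (hAdj : IsHSAdjoint Minv MinvAdj)
    (O : Matrix (Fin (2 ^ n)) (Fin (2 ^ n)) ℂ) (hO : O.IsHermitian)
    (ρ : Matrix (Fin (2 ^ n)) (Fin (2 ^ n)) ℂ) (hρ : IsDensityMatrix ρ) :
    ((Fintype.card κ : ℂ)⁻¹ * ∑ k : κ, ∑ b : Fin (2 ^ n),
        (E (U k * ρ * (U k)ᴴ)) b b *
          ((O * Minv ((U k)ᴴ * Matrix.single b b 1 * U k)).trace
            - (O * ρ).trace) ^ 2).re
      ≤ shadowNormSq U (⇑E) MinvAdj (O - (O.trace / (2 ^ n : ℂ)) • 1) := by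
  obtain ⟨hCP, hTP⟩ := hE
  have hpos := hCP.isPositiveMap
  set O₀ := O - (O.trace / (2 ^ n : ℂ)) • 1
  have hO₀ : O₀.IsHermitian := by
    have htr : IsSelfAdjoint O.trace := by rw [IsSelfAdjoint, ← trace_conjTranspose, hO.eq]
    exact hO.sub (isHermitian_one.smul (htr.div ((IsSelfAdjoint.natCast 2).pow n)))
  have hτ : ∀ k, IsDensityMatrix (E (U k * ρ * (U k)ᴴ)) := fun k =>
    (hρ.unitary_conj (hU k)).map hpos hTP
  have hcenter : ∀ k b, (O * Minv ((U k)ᴴ * single b b 1 * U k)).trace - (O * ρ).trace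
      = (O₀ᴴ * Minv ((U k)ᴴ * single b b 1 * U k)).trace - (O₀ᴴ * ρ).trace := fun k b => by
    rw [hO₀.eq]
    refine (trace_sub_smul_one_mul_sub_trace O _ ?_).symm
    rw [← trace_shadowChannel hU hTP (Minv _), hMinvR, trace_conjTranspose_mul_single_mul (hU k),
      hρ.2]
  calc _ = ((Fintype.card κ : ℂ)⁻¹ * ∑ k, ∑ b, E (U k * ρ * (U k)ᴴ) b b *
          ((O₀ᴴ * Minv ((U k)ᴴ * single b b 1 * U k)).trace - (O₀ᴴ * ρ).trace) ^ 2).re := by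
        simp only [hcenter]
    _ ≤ ((Fintype.card κ : ℂ)⁻¹ * ∑ k, ∑ b, E (U k * ρ * (U k)ᴴ) b b *
          (O₀ᴴ * Minv ((U k)ᴴ * single b b 1 * U k)).trace ^ 2).re :=
        re_mul_sum_sum_mul_sub_sq_le _ _ _ _ (inv_card_mul_sum_sum_diag_eq_one hτ)
          (hAdj.inv_card_mul_sum_sum_mul_trace hMinvL _ _)
          (by rw [hO₀.eq]; exact hO₀.im_trace_mul hρ.1.1)
    _ = ((Fintype.card κ : ℂ)⁻¹ * ∑ k, ∑ b, E (U k * ρ * (U k)ᴴ) b b *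
          ((U k * MinvAdj O₀ * (U k)ᴴ) b b) ^ 2).re := by
        simp only [hAdj.trace_mul_apply_conj_single]
        exact re_mul_sum_sum_mul_star_sq (by simp) (fun k b => (hτ k).im_diag b) _
    _ ≤ _ := re_le_shadowNormSq hU hpos hTP _ _ hρ

/-- the variance of the single-sample estimator is bounded by the squared shadow
seminorm of the traceless part of the observable. -/
theorem stmt_1 {n : ℕ} (hn : 1 ≤ n) {κ : Type*} [Fintype κ] [Nonempty κ]
    (U : κ → Matrix (Fin (2 ^ n)) (Fin (2 ^ n)) ℂ) (hU : IsUnitaryEnsemble U)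
    (E : Matrix (Fin (2 ^ n)) (Fin (2 ^ n)) ℂ →ₗ[ℂ] Matrix (Fin (2 ^ n)) (Fin (2 ^ n)) ℂ)
    (hE : IsQuantumChannel (⇑E))
    (Minv MinvAdj : Matrix (Fin (2 ^ n)) (Fin (2 ^ n)) ℂ → Matrix (Fin (2 ^ n)) (Fin (2 ^ n)) ℂ)
    (hMinvL : Function.LeftInverse Minv (shadowChannel U (⇑E)))
    (hMinvR : Function.RightInverse Minv (shadowChannel U (⇑E)))
    (hAdj : IsHSAdjoint Minv MinvAdj)
    (O : Matrix (Fin (2 ^ n)) (Fin (2 ^ n)) ℂ) (hO : O.IsHermitian)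
    (ρ : Matrix (Fin (2 ^ n)) (Fin (2 ^ n)) ℂ) (hρ : IsDensityMatrix ρ) :
    ((Fintype.card κ : ℂ)⁻¹ * ∑ k : κ, ∑ b : Fin (2 ^ n),
        (E (U k * ρ * (U k)ᴴ)) b b *
          ((O * Minv ((U k)ᴴ * Matrix.single b b 1 * U k)).trace
            - (O * ρ).trace) ^ 2).re
      ≤ shadowNormSq U (⇑E) MinvAdj (O - (O.trace / (2 ^ n : ℂ)) • 1) :=
  stmt_1_general U hU E hE Minv MinvAdj hMinvL hMinvR hAdj O hO ρ hρ

end NoisyShadows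
end
end

section
/- Let d₁, d₂ ≥ 1, let 𝒰₁, 𝒰₂ be unitary ensembles on ℂ^{d₁} and ℂ^{d₂} respectively, and let ℰ₁ : M_{d₁} → M_{d₁}, ℰ₂ : M_{d₂} → M_{d₂} be linear maps. Let 𝒰 = 𝒰₁ ⊗ 𝒰₂ be the product ensemble and let ℰ : M_{d₁·d₂} → M_{d₁·d₂} (matrices indexed by pairs) be a linear map satisfying ℰ(A ⊗ B) = ℰ₁(A) ⊗ ℰ₂(B) for all A ∈ M_{d₁}, B ∈ M_{d₂}. Then: (i) M_{𝒰,ℰ}(A ⊗ B) = M_{𝒰₁,ℰ₁}(A) ⊗ M_{𝒰₂,ℰ₂}(B) for all A ∈ M_{d₁}, B ∈ M_{d₂}; and (ii) if M_{𝒰₁,ℰ₁} and M_{𝒰₂,ℰ₂} are invertible, then M_{𝒰,ℰ} is invertible and M_{𝒰,ℰ}⁻¹(A ⊗ B) = M_{𝒰₁,ℰ₁}⁻¹(A) ⊗ M_{𝒰₂,ℰ₂}⁻¹(B) for all A, B. -/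
/-! Conjugation by `U₁ ⊗ U₂`, the product noise, the product basis projectors
`|b₁b₂⟩⟨b₁b₂| = |b₁⟩⟨b₁| ⊗ |b₂⟩⟨b₂|` and the uniform average over `κ₁ × κ₂` all factor over
Kronecker products, which gives (i). By (i), every Kronecker product, in particular every matrix
unit, lies in the range of the product channel, so this linear endomorphism of a
finite-dimensional space is onto, hence bijective; injectivity then identifies its inverse on
Kronecker products. -/

open scoped ComplexOrder Kronecker
open Matrix MeasureTheory

noncomputable section

namespace Matrix

variable {R α β l m n p : Type*}

theorem sum_kronecker_sum [CommSemiring R] [Fintype α] [Fintype β]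
    (f : α → Matrix l m R) (g : β → Matrix n p R) :
    (∑ a, f a) ⊗ₖ (∑ b, g b) = ∑ x : α × β, f x.1 ⊗ₖ g x.2 := by
  ext
  simp [Matrix.sum_apply, Fintype.sum_prod_type, Finset.sum_mul_sum]

theorem surjective_of_forall_kronecker_mem_range [Semiring R] [Finite l] [Finite m] [Finite n]
    [Finite p] [DecidableEq l] [DecidableEq m] [DecidableEq n] [DecidableEq p]
    {M F : Type*} [AddZeroClass M] [FunLike F M (Matrix (l × n) (m × p) R)]
    [AddMonoidHomClass F M (Matrix (l × n) (m × p) R)] (f : F)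
    (h : ∀ A B, A ⊗ₖ B ∈ Set.range f) : Function.Surjective f := by
  intro C
  induction C using Matrix.induction_on' with
  | h_zero => exact ⟨0, map_zero f⟩
  | h_add _ _ hC hD =>
    obtain ⟨x, rfl⟩ := hC
    obtain ⟨y, rfl⟩ := hD
    exact ⟨x + y, map_add f x y⟩
  | h_std_basis i j c =>
    rw [← mul_one c, ← single_kronecker_single i.1 j.1 i.2 j.2]
    exact h _ _

theorem invFun_kronecker [MulZeroClass R] {l' m' n' p' : Type*}
    {f : Matrix (l × n) (m × p) R → Matrix (l' × n') (m' × p') R}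
    {f₁ : Matrix l m R → Matrix l' m' R} {f₂ : Matrix n p R → Matrix n' p' R}
    (hf : Function.Injective f) (hf₁ : Function.Surjective f₁) (hf₂ : Function.Surjective f₂)
    (h : ∀ A B, f (A ⊗ₖ B) = f₁ A ⊗ₖ f₂ B) (A : Matrix l' m' R) (B : Matrix n' p' R) :
    Function.invFun f (A ⊗ₖ B) = Function.invFun f₁ A ⊗ₖ Function.invFun f₂ B := by
  have hAB : f (Function.invFun f₁ A ⊗ₖ Function.invFun f₂ B) = A ⊗ₖ B := by
    rw [h, Function.invFun_eq (hf₁ A), Function.invFun_eq (hf₂ B)]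
  exact hf (by rw [Function.invFun_eq ⟨_, hAB⟩, hAB])

end Matrix

namespace NoisyShadows

section

variable {κ ι : Type*} [Fintype κ] [Fintype ι] [DecidableEq ι]

def shadowChannelₗ (U : κ → Matrix ι ι ℂ) (E : Matrix ι ι ℂ →ₗ[ℂ] Matrix ι ι ℂ) :
    Matrix ι ι ℂ →ₗ[ℂ] Matrix ι ι ℂ where
  toFun := shadowChannel U E
  map_add' A B := by
    simp only [shadowChannel, Matrix.mul_add, Matrix.add_mul, map_add, Matrix.add_apply, add_smul,
      Finset.sum_add_distrib, smul_add]
  map_smul' c A := by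
    simp only [shadowChannel, Matrix.mul_smul, Matrix.smul_mul, map_smul, Matrix.smul_apply,
      smul_eq_mul, ← smul_smul, ← Finset.smul_sum, RingHom.id_apply]
    rw [smul_comm]

theorem coe_shadowChannelₗ (U : κ → Matrix ι ι ℂ) (E : Matrix ι ι ℂ →ₗ[ℂ] Matrix ι ι ℂ) :
    ⇑(shadowChannelₗ U E) = shadowChannel U E :=
  rfl

theorem shadowChannel_bijective_iff_surjective (U : κ → Matrix ι ι ℂ)
    (E : Matrix ι ι ℂ →ₗ[ℂ] Matrix ι ι ℂ) :
    Function.Bijective (shadowChannel U E) ↔ Function.Surjective (shadowChannel U E) := by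
  rw [← coe_shadowChannelₗ, Function.Bijective, ← LinearMap.injective_iff_surjective, and_self]

end

theorem shadowChannel_kronecker {κ₁ κ₂ ι₁ ι₂ : Type*} [Fintype κ₁] [Fintype κ₂]
    [Fintype ι₁] [Fintype ι₂] [DecidableEq ι₁] [DecidableEq ι₂]
    (U₁ : κ₁ → Matrix ι₁ ι₁ ℂ) (U₂ : κ₂ → Matrix ι₂ ι₂ ℂ)
    {E₁ : Matrix ι₁ ι₁ ℂ → Matrix ι₁ ι₁ ℂ} {E₂ : Matrix ι₂ ι₂ ℂ → Matrix ι₂ ι₂ ℂ}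
    {E : Matrix (ι₁ × ι₂) (ι₁ × ι₂) ℂ → Matrix (ι₁ × ι₂) (ι₁ × ι₂) ℂ}
    (hE : ∀ A B, E (A ⊗ₖ B) = E₁ A ⊗ₖ E₂ B) (A : Matrix ι₁ ι₁ ℂ) (B : Matrix ι₂ ι₂ ℂ) :
    shadowChannel (fun k : κ₁ × κ₂ => U₁ k.1 ⊗ₖ U₂ k.2) E (A ⊗ₖ B)
      = shadowChannel U₁ E₁ A ⊗ₖ shadowChannel U₂ E₂ B := by
  have hterm : ∀ (k : κ₁ × κ₂) (b : ι₁ × ι₂),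
      E ((U₁ k.1 ⊗ₖ U₂ k.2) * (A ⊗ₖ B) * (U₁ k.1 ⊗ₖ U₂ k.2)ᴴ) b b •
          ((U₁ k.1 ⊗ₖ U₂ k.2)ᴴ * single b b 1 * (U₁ k.1 ⊗ₖ U₂ k.2))
        = (E₁ (U₁ k.1 * A * (U₁ k.1)ᴴ) b.1 b.1 • ((U₁ k.1)ᴴ * single b.1 b.1 1 * U₁ k.1)) ⊗ₖ
          (E₂ (U₂ k.2 * B * (U₂ k.2)ᴴ) b.2 b.2 • ((U₂ k.2)ᴴ * single b.2 b.2 1 * U₂ k.2)) := by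
    intro k b
    have hsingle : single b b (1 : ℂ) = single b.1 b.1 1 ⊗ₖ single b.2 b.2 1 := by
      rw [single_kronecker_single, mul_one]
    rw [conjTranspose_kronecker, ← mul_kronecker_mul, ← mul_kronecker_mul, hE,
      hsingle, ← mul_kronecker_mul, ← mul_kronecker_mul,
      smul_kronecker, kronecker_smul, kroneckerMap_apply, smul_smul]
  simp only [shadowChannel, hterm, smul_kronecker, kronecker_smul, smul_smul, sum_kronecker_sum,
    Fintype.card_prod, Nat.cast_mul, mul_inv, mul_comm]

theorem stmt_3_general {d₁ d₂ : ℕ}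
    {κ₁ κ₂ : Type*} [Fintype κ₁] [Fintype κ₂]
    (U₁ : κ₁ → Matrix (Fin d₁) (Fin d₁) ℂ)
    (U₂ : κ₂ → Matrix (Fin d₂) (Fin d₂) ℂ)
    (E₁ : Matrix (Fin d₁) (Fin d₁) ℂ →ₗ[ℂ] Matrix (Fin d₁) (Fin d₁) ℂ)
    (E₂ : Matrix (Fin d₂) (Fin d₂) ℂ →ₗ[ℂ] Matrix (Fin d₂) (Fin d₂) ℂ)
    (E : Matrix (Fin d₁ × Fin d₂) (Fin d₁ × Fin d₂) ℂ →ₗ[ℂ]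
      Matrix (Fin d₁ × Fin d₂) (Fin d₁ × Fin d₂) ℂ)
    (hE : ∀ (A : Matrix (Fin d₁) (Fin d₁) ℂ) (B : Matrix (Fin d₂) (Fin d₂) ℂ),
      E (A ⊗ₖ B) = (E₁ A) ⊗ₖ (E₂ B)) :
    (∀ (A : Matrix (Fin d₁) (Fin d₁) ℂ) (B : Matrix (Fin d₂) (Fin d₂) ℂ),
      shadowChannel (fun p : κ₁ × κ₂ => U₁ p.1 ⊗ₖ U₂ p.2) (⇑E) (A ⊗ₖ B)
        = shadowChannel U₁ (⇑E₁) A ⊗ₖ shadowChannel U₂ (⇑E₂) B) ∧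
    (Function.Bijective (shadowChannel U₁ (⇑E₁)) →
      Function.Bijective (shadowChannel U₂ (⇑E₂)) →
      Function.Bijective (shadowChannel (fun p : κ₁ × κ₂ => U₁ p.1 ⊗ₖ U₂ p.2) (⇑E)) ∧
      ∀ (A : Matrix (Fin d₁) (Fin d₁) ℂ) (B : Matrix (Fin d₂) (Fin d₂) ℂ),
        Function.invFun (shadowChannel (fun p : κ₁ × κ₂ => U₁ p.1 ⊗ₖ U₂ p.2) (⇑E)) (A ⊗ₖ B)
          = Function.invFun (shadowChannel U₁ (⇑E₁)) A ⊗ₖ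
            Function.invFun (shadowChannel U₂ (⇑E₂)) B) := by
  have hprod := shadowChannel_kronecker U₁ U₂ hE
  refine ⟨hprod, fun h₁ h₂ => ?_⟩
  have hbij : Function.Bijective
      (shadowChannel (fun p : κ₁ × κ₂ => U₁ p.1 ⊗ₖ U₂ p.2) (⇑E)) := by
    rw [shadowChannel_bijective_iff_surjective, ← coe_shadowChannelₗ]
    refine surjective_of_forall_kronecker_mem_range _ fun A B => ?_
    obtain ⟨X, rfl⟩ := h₁.2 A
    obtain ⟨Y, rfl⟩ := h₂.2 B
    exact ⟨X ⊗ₖ Y, hprod X Y⟩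
  exact ⟨hbij, invFun_kronecker hbij.1 h₁.2 h₂.2 hprod⟩

/-- the shadow channel of a product ensemble with product noise factorizes on
Kronecker products, and so does its inverse. -/
theorem stmt_3 {d₁ d₂ : ℕ} (hd₁ : 1 ≤ d₁) (hd₂ : 1 ≤ d₂)
    {κ₁ κ₂ : Type*} [Fintype κ₁] [Nonempty κ₁] [Fintype κ₂] [Nonempty κ₂]
    (U₁ : κ₁ → Matrix (Fin d₁) (Fin d₁) ℂ) (hU₁ : IsUnitaryEnsemble U₁)
    (U₂ : κ₂ → Matrix (Fin d₂) (Fin d₂) ℂ) (hU₂ : IsUnitaryEnsemble U₂)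
    (E₁ : Matrix (Fin d₁) (Fin d₁) ℂ →ₗ[ℂ] Matrix (Fin d₁) (Fin d₁) ℂ)
    (E₂ : Matrix (Fin d₂) (Fin d₂) ℂ →ₗ[ℂ] Matrix (Fin d₂) (Fin d₂) ℂ)
    (E : Matrix (Fin d₁ × Fin d₂) (Fin d₁ × Fin d₂) ℂ →ₗ[ℂ]
      Matrix (Fin d₁ × Fin d₂) (Fin d₁ × Fin d₂) ℂ)
    (hE : ∀ (A : Matrix (Fin d₁) (Fin d₁) ℂ) (B : Matrix (Fin d₂) (Fin d₂) ℂ),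
      E (A ⊗ₖ B) = (E₁ A) ⊗ₖ (E₂ B)) :
    (∀ (A : Matrix (Fin d₁) (Fin d₁) ℂ) (B : Matrix (Fin d₂) (Fin d₂) ℂ),
      shadowChannel (fun p : κ₁ × κ₂ => U₁ p.1 ⊗ₖ U₂ p.2) (⇑E) (A ⊗ₖ B)
        = shadowChannel U₁ (⇑E₁) A ⊗ₖ shadowChannel U₂ (⇑E₂) B) ∧
    (Function.Bijective (shadowChannel U₁ (⇑E₁)) →
      Function.Bijective (shadowChannel U₂ (⇑E₂)) →
      Function.Bijective (shadowChannel (fun p : κ₁ × κ₂ => U₁ p.1 ⊗ₖ U₂ p.2) (⇑E)) ∧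
      ∀ (A : Matrix (Fin d₁) (Fin d₁) ℂ) (B : Matrix (Fin d₂) (Fin d₂) ℂ),
        Function.invFun (shadowChannel (fun p : κ₁ × κ₂ => U₁ p.1 ⊗ₖ U₂ p.2) (⇑E)) (A ⊗ₖ B)
          = Function.invFun (shadowChannel U₁ (⇑E₁)) A ⊗ₖ
            Function.invFun (shadowChannel U₂ (⇑E₂)) B) :=
  stmt_3_general U₁ U₂ E₁ E₂ E hE

end NoisyShadows
end
end
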